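/- For an irreducible polynomial f over 𝔽₂ of degree m, there exists a generating vector g* ∈ G_m^s such that B_γ(g*, f) ≤ 2^{-m} · Σ_{∅ ≠ u ⊆ [s]} γ_u (m/2)^{|u|} ∏_{i∈u}(b_i - a_i). Moreover, for every c ≥ 1, the number of g ∈ G_m^s with B_γ(g, f) ≤ c · 2^{-m} Σ_{∅ ≠ u ⊆ [s]} γ_u (m/2)^{|u|} ∏_{i∈u}(b_i - a_i) exceeds 2^{sm}(1 - 1/c). -/

import Mathlib

open scoped Classical

/-- identification of a natural number with a polynomial over `𝔽₂` via its binary digits. -/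
noncomputable def natToPoly (n : ℕ) : Polynomial (ZMod 2) :=
  ∑ i ∈ Finset.range (Nat.size n), if Nat.testBit n i then Polynomial.X ^ i else 0

/-- `μ(k)`, the length of the binary expansion of `k`. -/
def mu (k : ℕ) : ℕ := Nat.size k

/-- the figure-of-merit `B_γ(g, f)`. -/
noncomputable def Bcrit (s m : ℕ) (γ : Finset (Fin s) → ℝ) (a b : Fin s → ℝ)
    (f : Polynomial (ZMod 2)) (g : Fin s → ℕ) : ℝ :=
  ∑ u ∈ Finset.univ.powerset.filter (fun u : Finset (Fin s) => u.Nonempty),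
    γ u * (∏ i ∈ u, (b i - a i)) *
      ∑ k ∈ u.pi fun _ => Finset.Icc 1 (2 ^ m - 1),
        if f ∣ ∑ i ∈ u.attach, natToPoly (g i.1) * natToPoly (k i.1 i.2) then
          (1 : ℝ) / 2 ^ (∑ i ∈ u.attach, mu (k i.1 i.2))
        else 0

/-!
Reducing modulo `f` identifies the binary polynomials of degree `< m` with the field
`𝔽₂[x]/(f)` of `2^m` elements. For a fixed `k_u` with nonzero entries the condition
`g_u · k_u ≡ 0 (mod f)` is then a nonzero linear equation in `g`, satisfied by exactly
`2^(m(s-1))` of the `2^(ms)` vectors. Summing over `g` shows that the average of `B_γ` is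
`2^(-m) Σ_u γ_u ∏_{i∈u} (b_i - a_i) (Σ_{k=1}^{2^m-1} 2^(-μ(k)))^|u|`, and the inner sum is `m/2`
because each dyadic block `[2^j, 2^(j+1))` contributes `1/2`. Markov's inequality (strict since
the average is positive) gives the count, and its case `c = 1` gives the existence.
-/

open Polynomial Finset

lemma card_filter_piFinset_comp_of_bijOn {α β ι : Type*} [DecidableEq ι] [Fintype ι] [Finite β]
    {E : α → β} {A : Finset α} (hE : Set.BijOn E A Set.univ) (P : (ι → β) → Prop)
    [DecidablePred P] :
    #{g ∈ Fintype.piFinset fun _ => A | P fun i => E (g i)} = Nat.card {x // P x} := by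
  have := Fintype.ofFinite β
  rw [← Fintype.card_eq_nat_card, Fintype.card_subtype]
  refine card_nbij (fun g i => E (g i)) (fun g hg => by simpa using (mem_filter.1 hg).2)
    (fun g₁ hg₁ g₂ hg₂ h => funext fun i => hE.injOn ?_ ?_ (congrFun h i)) fun x hx => ?_
  · exact Fintype.mem_piFinset.1 (mem_filter.1 hg₁).1 i
  · exact Fintype.mem_piFinset.1 (mem_filter.1 hg₂).1 i
  · choose g hgA hgx using fun i => hE.surjOn (Set.mem_univ (x i))
    refine ⟨g, ?_, funext hgx⟩
    simp only [coe_filter, mem_univ, true_and, Set.mem_ofPred_eq] at hx ⊢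
    exact ⟨Fintype.mem_piFinset.2 hgA, by simpa only [hgx] using hx⟩

lemma natCard_sum_mul_eq_zero {F ι : Type*} [Field F] [Fintype ι]
    (u : Finset ι) (c : ι → F) {j : ι} (hj : j ∈ u) (hcj : c j ≠ 0) :
    Nat.card {x : ι → F // ∑ i ∈ u, x i * c i = 0} = Nat.card F ^ (Fintype.card ι - 1) := by
  let φ : (ι → F) →ₗ[F] F := ∑ i ∈ u, (LinearMap.proj i).smulRight (c i)
  have hφ : ∀ x, φ x = ∑ i ∈ u, x i * c i := fun x => by simp [φ]
  have hsurj : Function.Surjective φ := fun y => ⟨Pi.single j (y / c j), by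
    rw [hφ, sum_eq_single_of_mem j hj fun i _ hij => by simp [hij], Pi.single_eq_same,
      div_mul_cancel₀ y hcj]⟩
  have hker : Module.finrank F (LinearMap.ker φ) = Fintype.card ι - 1 := by
    have := φ.finrank_range_add_finrank_ker
    rw [LinearMap.range_eq_top.2 hsurj, finrank_top, Module.finrank_self,
      Module.finrank_fintype_fun_eq_card] at this
    omega
  rw [← hker, ← Module.natCard_eq_pow_finrank]
  simp_rw [← hφ]
  rfl

lemma card_mul_one_sub_inv_lt_card_filter_le {α : Type*} {S : Finset α} (hS : S.Nonempty)
    {B : α → ℝ} (hB : ∀ x ∈ S, 0 ≤ B x) {T : ℝ} (hT : 0 < T) (hsum : ∑ x ∈ S, B x ≤ #S * T)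
    {c : ℝ} (hc : 0 < c) [DecidablePred fun x => B x ≤ c * T] :
    #S * (1 - 1 / c) < #{x ∈ S | B x ≤ c * T} := by
  have hsplit : (#{x ∈ S | B x ≤ c * T} : ℝ) + #{x ∈ S | ¬B x ≤ c * T} = #S := by
    exact_mod_cast card_filter_add_card_filter_not _
  have hbad : (#{x ∈ S | ¬B x ≤ c * T} : ℝ) * c < #S := by
    rcases eq_empty_or_nonempty {x ∈ S | ¬B x ≤ c * T} with hempty | hne
    · rw [hempty, card_empty, Nat.cast_zero, zero_mul]
      exact_mod_cast hS.card_pos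
    · refine lt_of_mul_lt_mul_right ?_ hT.le
      calc (#{x ∈ S | ¬B x ≤ c * T} : ℝ) * c * T = ∑ x ∈ {x ∈ S | ¬B x ≤ c * T}, c * T := by
            rw [sum_const, nsmul_eq_mul, mul_assoc]
        _ < ∑ x ∈ {x ∈ S | ¬B x ≤ c * T}, B x :=
            sum_lt_sum_of_nonempty hne fun x hx => not_le.1 (mem_filter.1 hx).2
        _ ≤ ∑ x ∈ S, B x :=
            sum_le_sum_of_subset_of_nonneg (filter_subset _ _) fun x hx _ => hB x hx
        _ ≤ #S * T := hsum
  have hbad' : (#{x ∈ S | ¬B x ≤ c * T} : ℝ) < #S / c := (lt_div_iff₀ hc).2 hbad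
  have hS' : (#S : ℝ) * (1 - 1 / c) = #S - #S / c := by field_simp
  linarith

lemma size_eq_of_mem_Ico_two_pow {k m : ℕ} (hk : k ∈ Ico (2 ^ m) (2 ^ (m + 1))) :
    k.size = m + 1 :=
  le_antisymm (Nat.size_le.2 (mem_Ico.1 hk).2) (Nat.lt_size.2 (mem_Ico.1 hk).1)

lemma sum_Ico_two_pow_inv_two_pow_size (m : ℕ) :
    ∑ k ∈ Ico (2 ^ m) (2 ^ (m + 1)), (1 : ℝ) / 2 ^ k.size = 1 / 2 := by
  have hcard : 2 ^ (m + 1) - 2 ^ m = 2 ^ m := by rw [pow_succ]; omega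
  rw [sum_congr rfl fun k hk => by rw [size_eq_of_mem_Ico_two_pow hk], sum_const, Nat.card_Ico,
    hcard, nsmul_eq_mul]
  push_cast
  field_simp
  ring

lemma sum_Ico_inv_two_pow_size (m : ℕ) :
    ∑ k ∈ Ico 1 (2 ^ m), (1 : ℝ) / 2 ^ k.size = (m : ℝ) / 2 := by
  induction m with
  | zero => simp
  | succ m ih =>
    rw [← sum_Ico_consecutive _ Nat.one_le_two_pow (Nat.pow_le_pow_right two_pos (m.le_add_right 1)),
      ih, sum_Ico_two_pow_inv_two_pow_size]
    push_cast
    ring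

lemma sum_pi_inv_two_pow_mu {ι : Type*} [DecidableEq ι] (u : Finset ι) (m : ℕ) :
    ∑ k ∈ u.pi fun _ => Icc 1 (2 ^ m - 1), (1 : ℝ) / 2 ^ (∑ i ∈ u.attach, mu (k i.1 i.2)) =
      ((m : ℝ) / 2) ^ u.card := by
  have hIcc : Icc 1 (2 ^ m - 1) = Ico 1 (2 ^ m) := by
    ext k
    simp only [mem_Icc, mem_Ico]
    have := Nat.one_le_two_pow (n := m)
    omega
  rw [← sum_Ico_inv_two_pow_size, ← hIcc, ← prod_const, prod_sum]
  refine sum_congr rfl fun k _ => ?_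
  rw [prod_div_distrib, prod_const_one, prod_pow_eq_pow_sum]
  rfl

lemma natToPoly_coeff (n j : ℕ) :
    (natToPoly n).coeff j = if n.testBit j then 1 else 0 := by
  simp_rw [natToPoly, finsetSum_coeff, apply_ite (coeff · j), coeff_X_pow, coeff_zero,
    ← ite_and, and_comm, ite_and, sum_ite_eq, mem_range, ite_eq_left_iff, not_lt]
  intro hj
  rw [Nat.testBit_eq_false_of_lt ((Nat.lt_size_self n).trans_le (Nat.pow_le_pow_right two_pos hj)),
    if_neg Bool.false_ne_true]

lemma natToPoly_injective : Function.Injective natToPoly := by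
  intro n₁ n₂ h
  refine Nat.eq_of_testBit_eq fun i => ?_
  have := congrArg (coeff · i) h
  simp only [natToPoly_coeff] at this
  cases h₁ : n₁.testBit i <;> cases h₂ : n₂.testBit i <;> simp_all

lemma degree_natToPoly_lt {n m : ℕ} (hn : n < 2 ^ m) : (natToPoly n).degree < m := by
  refine (degree_sum_le _ _).trans_lt ((Finset.sup_lt_iff (WithBot.bot_lt_coe m)).2 fun i hi => ?_)
  have him : i < m := (mem_range.1 hi).trans_le (Nat.size_le.2 hn)
  split_ifs
  · exact (degree_X_pow_le i).trans_lt (WithBot.coe_lt_coe.2 him)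
  · exact degree_zero.trans_lt (WithBot.bot_lt_coe m)

lemma finite_adjoinRoot {f : (ZMod 2)[X]} (hf : f ≠ 0) : Finite (AdjoinRoot f) :=
  have := (AdjoinRoot.powerBasis hf).finite
  Module.finite_of_finite (ZMod 2)

lemma natCard_adjoinRoot {f : (ZMod 2)[X]} (hf : f ≠ 0) :
    Nat.card (AdjoinRoot f) = 2 ^ f.natDegree := by
  have := (AdjoinRoot.powerBasis hf).finite
  rw [Module.natCard_eq_pow_finrank (K := ZMod 2), (AdjoinRoot.powerBasis hf).finrank,
    AdjoinRoot.powerBasis_dim, Nat.card_zmod]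

lemma injOn_mk_natToPoly {f : (ZMod 2)[X]} (hf : f ≠ 0) :
    Set.InjOn (fun n => AdjoinRoot.mk f (natToPoly n)) (range (2 ^ f.natDegree)) := by
  intro n₁ h₁ n₂ h₂ h
  have hdvd : f ∣ natToPoly n₁ - natToPoly n₂ := by
    rwa [← AdjoinRoot.mk_eq_zero, map_sub, sub_eq_zero]
  have hdeg : (natToPoly n₁ - natToPoly n₂).degree < f.degree := by
    rw [degree_eq_natDegree hf]
    exact (degree_sub_le _ _).trans_lt (max_lt (degree_natToPoly_lt (mem_range.1 h₁))
      (degree_natToPoly_lt (mem_range.1 h₂)))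
  exact natToPoly_injective (sub_eq_zero.1 (eq_zero_of_dvd_of_degree_lt hdvd hdeg))

lemma bijOn_mk_natToPoly {f : (ZMod 2)[X]} (hf : f ≠ 0) :
    Set.BijOn (fun n => AdjoinRoot.mk f (natToPoly n)) (range (2 ^ f.natDegree)) Set.univ := by
  have := finite_adjoinRoot hf
  let := Fintype.ofFinite (AdjoinRoot f)
  refine ⟨Set.mapsTo_univ _ _, injOn_mk_natToPoly hf, ?_⟩
  have := surjOn_of_injOn_of_card_le (t := univ) _ (fun _ _ => mem_univ _) (injOn_mk_natToPoly hf)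
    (by rw [card_univ, Fintype.card_eq_nat_card, natCard_adjoinRoot hf, card_range])
  simpa using this

lemma card_filter_dvd_sum_natToPoly_mul {ι : Type*} [DecidableEq ι] [Fintype ι]
    {f : (ZMod 2)[X]} (hf : Irreducible f) (u : Finset ι) (k : (i : ι) → i ∈ u → ℕ) {j : ι}
    (hj : j ∈ u) (hkj : k j hj ∈ Icc 1 (2 ^ f.natDegree - 1)) :
    #{g ∈ Fintype.piFinset fun _ => range (2 ^ f.natDegree) |
        f ∣ ∑ i ∈ u.attach, natToPoly (g i.1) * natToPoly (k i.1 i.2)} =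
      2 ^ (f.natDegree * (Fintype.card ι - 1)) := by
  have := Fact.mk hf
  have := finite_adjoinRoot hf.ne_zero
  let E n := AdjoinRoot.mk f (natToPoly n)
  have hE : Set.BijOn E _ _ := bijOn_mk_natToPoly hf.ne_zero
  let c i := if h : i ∈ u then E (k i h) else 0
  have hcj : c j ≠ 0 := by
    obtain ⟨hk₁, hk₂⟩ := mem_Icc.1 hkj
    have hE0 : E 0 = 0 := by simp [E, natToPoly]
    intro h
    rw [show c j = E (k j hj) from dif_pos hj, ← hE0] at h
    have := hE.injOn (mem_range.2 (by omega)) (mem_range.2 (by positivity)) h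
    omega
  have hdvd : ∀ g : ι → ℕ, f ∣ ∑ i ∈ u.attach, natToPoly (g i.1) * natToPoly (k i.1 i.2) ↔
      ∑ i ∈ u, E (g i) * c i = 0 := fun g => by
    rw [← AdjoinRoot.mk_eq_zero, map_sum, ← sum_attach u]
    simp [c, E]
  rw [filter_congr fun g _ => hdvd g,
    card_filter_piFinset_comp_of_bijOn hE fun x => ∑ i ∈ u, x i * c i = 0,
    natCard_sum_mul_eq_zero u c hj hcj, natCard_adjoinRoot hf.ne_zero, pow_mul]

lemma Bcrit_nonneg {s m : ℕ} {γ : Finset (Fin s) → ℝ} {a b : Fin s → ℝ} (hγ : ∀ u, 0 ≤ γ u)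
    (hab : ∀ i, a i ≤ b i) (f : (ZMod 2)[X]) (g : Fin s → ℕ) : 0 ≤ Bcrit s m γ a b f g :=
  sum_nonneg fun u _ => mul_nonneg (mul_nonneg (hγ u) (prod_nonneg fun i _ => sub_nonneg.2 (hab i)))
    (sum_nonneg fun _ _ => by split_ifs <;> positivity)

lemma sum_Bcrit_eq {s : ℕ} (γ : Finset (Fin s) → ℝ) (a b : Fin s → ℝ) {f : (ZMod 2)[X]}
    (hf : Irreducible f) :
    ∑ g ∈ Fintype.piFinset (fun _ : Fin s => range (2 ^ f.natDegree)),
        Bcrit s f.natDegree γ a b f g =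
      2 ^ (f.natDegree * (s - 1)) * ∑ u ∈ univ.powerset.filter (fun u : Finset (Fin s) => u.Nonempty),
        γ u * ((f.natDegree : ℝ) / 2) ^ u.card * ∏ i ∈ u, (b i - a i) := by
  unfold Bcrit
  rw [sum_comm, mul_sum]
  refine sum_congr rfl fun u hu => ?_
  obtain ⟨j, hj⟩ := (mem_filter.1 hu).2
  rw [← mul_sum, sum_comm]
  have hcount : ∀ k ∈ u.pi fun _ => Icc 1 (2 ^ f.natDegree - 1),
      ∑ g ∈ Fintype.piFinset (fun _ : Fin s => range (2 ^ f.natDegree)),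
        (if f ∣ ∑ i ∈ u.attach, natToPoly (g i.1) * natToPoly (k i.1 i.2) then
          (1 : ℝ) / 2 ^ (∑ i ∈ u.attach, mu (k i.1 i.2)) else 0) =
        (1 : ℝ) / 2 ^ (∑ i ∈ u.attach, mu (k i.1 i.2)) * 2 ^ (f.natDegree * (s - 1)) := by
    intro k hk
    rw [sum_ite, sum_const_zero, add_zero, sum_const, nsmul_eq_mul,
      card_filter_dvd_sum_natToPoly_mul hf u k hj (mem_pi.1 hk j hj), Fintype.card_fin]
    push_cast
    ring
  rw [sum_congr rfl hcount, ← sum_mul, sum_pi_inv_two_pow_mu]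
  ring

theorem Bcrit_exists_good (s m : ℕ) (hs : 1 ≤ s) (hm : 1 ≤ m)
    (γ : Finset (Fin s) → ℝ) (hγ : ∀ u, 0 < γ u) (a b : Fin s → ℝ) (hab : ∀ i, a i < b i)
    (f : Polynomial (ZMod 2)) (hf : Irreducible f) (hdeg : f.natDegree = m) :
    (∃ g ∈ Fintype.piFinset fun _ : Fin s => Finset.range (2 ^ m),
        Bcrit s m γ a b f g ≤
          (1 / 2 ^ m) *
            ∑ u ∈ Finset.univ.powerset.filter (fun u : Finset (Fin s) => u.Nonempty),
              γ u * ((m : ℝ) / 2) ^ u.card * ∏ i ∈ u, (b i - a i)) ∧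
      ∀ c : ℝ, 1 ≤ c →
        (2 : ℝ) ^ (s * m) * (1 - 1 / c) <
          (((Fintype.piFinset fun _ : Fin s => Finset.range (2 ^ m)).filter fun g =>
              Bcrit s m γ a b f g ≤
                c * ((1 / 2 ^ m) *
                  ∑ u ∈ Finset.univ.powerset.filter (fun u : Finset (Fin s) => u.Nonempty),
                    γ u * ((m : ℝ) / 2) ^ u.card * ∏ i ∈ u, (b i - a i))).card : ℝ) := by
  subst hdeg
  set T := 1 / 2 ^ f.natDegree * ∑ u ∈ univ.powerset.filter (fun u : Finset (Fin s) => u.Nonempty),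
    γ u * ((f.natDegree : ℝ) / 2) ^ u.card * ∏ i ∈ u, (b i - a i) with hT
  have hTpos : 0 < T := by
    have hne : (univ : Finset (Fin s)) ∈ univ.powerset.filter (fun u => u.Nonempty) :=
      mem_filter.2 ⟨mem_powerset_self _, univ_nonempty_iff.2 ⟨⟨0, hs⟩⟩⟩
    refine mul_pos (by positivity) (sum_pos (fun u _ => ?_) ⟨_, hne⟩)
    exact mul_pos (mul_pos (hγ u) (pow_pos (div_pos (Nat.cast_pos.2 hm) two_pos) _))
      (prod_pos fun i _ => sub_pos.2 (hab i))
  have hcard : (#(Fintype.piFinset fun _ : Fin s => range (2 ^ f.natDegree)) : ℝ) =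
      2 ^ (s * f.natDegree) := by
    simp [Fintype.card_piFinset, ← pow_mul, mul_comm]
  have hsum : ∑ g ∈ Fintype.piFinset (fun _ : Fin s => range (2 ^ f.natDegree)),
      Bcrit s f.natDegree γ a b f g = 2 ^ (s * f.natDegree) * T := by
    obtain ⟨n, rfl⟩ : ∃ n, s = n + 1 := ⟨s - 1, by omega⟩
    rw [sum_Bcrit_eq γ a b hf, hT, Nat.add_sub_cancel, add_mul, one_mul, pow_add]
    field_simp
    ring
  have markov (c : ℝ) (hc : 1 ≤ c) := hcard ▸ card_mul_one_sub_inv_lt_card_filter_le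
    (Fintype.piFinset_nonempty.2 fun _ => nonempty_range_iff.2 (by positivity))
    (fun g _ => Bcrit_nonneg (fun u => (hγ u).le) (fun i => (hab i).le) f g) hTpos
    (hcard ▸ hsum.le) (zero_lt_one.trans_le hc)
  refine ⟨?_, markov⟩
  obtain ⟨g, hg⟩ := card_pos.1 (by exact_mod_cast (by simpa using markov 1 le_rfl))
  exact ⟨g, mem_filter.1 hg⟩
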